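/- arXiv:1107.5764 — 3 statements merged into one kernel-verified Lean document; each statement's English description precedes it below -/
import Mathlib

section
/- Let X ⊆ ℂ be a measurable set with area(X) > 0, let r > 0 satisfy π r² = area(X), and write X₋ = X ∩ D_r, X₊ = X \ D_r, X_c = D_r \ X₋, where D_r is the open disc of radius r centered at 0. Then area(X₊) ≤ area(X_c), and for the map Q(w) = w^d one has area(Q⁻¹(X₊)) ≤ area(Q⁻¹(X_c)). -/
/-!
Since `X` and `D_r` have the same finite area, removing their common part `X ∩ D_r` from each
leaves sets of equal area.

For the second inequality let `S^{1/d}` be the image of `S` under the principal `d`-th root.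
Away from `0`, `Q(w) = w ^ d` is `d`-to-one, its fibres being the rotations of the principal
root by the `d`-th roots of unity, so `area (Q⁻¹ S) = d · area (S^{1/d})`. By change of
variables `area S = ∫_{S^{1/d}} |Q'|²`, where `|Q'(w)|² = d² |w|^{2(d-1)}` increases with `|w|`.
As `X₊^{1/d}` lies outside the circle of radius `r^{1/d}` and `X_c^{1/d}` inside it, comparing
the Jacobian with its value on that circle turns `area X₊ ≤ area X_c` into
`area (X₊^{1/d}) ≤ area (X_c^{1/d})`.
-/

open MeasureTheory Complex Set

theorem measure_le_measure_of_setLIntegral_le {α : Type*} [MeasurableSpace α] {μ : Measure α}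
    {f : α → ENNReal} {s t : Set α} {c : ENNReal} (hs : MeasurableSet s) (ht : MeasurableSet t)
    (hc0 : c ≠ 0) (hctop : c ≠ ⊤) (hfs : ∀ x ∈ s, c ≤ f x) (hft : ∀ x ∈ t, f x ≤ c)
    (hst : ∫⁻ x in s, f x ∂μ ≤ ∫⁻ x in t, f x ∂μ) : μ s ≤ μ t := by
  rw [← ENNReal.mul_le_mul_iff_right hc0 hctop, ← setLIntegral_const, ← setLIntegral_const]
  calc ∫⁻ _ in s, c ∂μ ≤ ∫⁻ x in s, f x ∂μ := setLIntegral_mono' hs hfs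
    _ ≤ ∫⁻ x in t, f x ∂μ := hst
    _ ≤ ∫⁻ _ in t, c ∂μ := setLIntegral_mono' ht hft

namespace Complex

theorem det_restrictScalars_smulRight_one (c : ℂ) :
    ((ContinuousLinearMap.smulRight (1 : ℂ →L[ℂ] ℂ) c).restrictScalars ℝ).det = normSq c := by
  rw [ContinuousLinearMap.det, ContinuousLinearMap.coe_restrictScalars,
    LinearMap.det_restrictScalars, Algebra.norm_complex_apply]
  simp

theorem volume_image_const_mul (c : ℂ) (s : Set ℂ) :
    volume ((c * ·) '' s) = ENNReal.ofReal (normSq c) * volume s := by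
  have h := Measure.addHaar_image_continuousLinearMap volume
    ((ContinuousLinearMap.smulRight (1 : ℂ →L[ℂ] ℂ) c).restrictScalars ℝ) s
  rw [← ContinuousLinearMap.det, det_restrictScalars_smulRight_one,
    abs_of_nonneg (normSq_nonneg c)] at h
  convert h using 3
  simp [mul_comm]

variable {d : ℕ}

theorem cpow_inv_natCast_injective (hd : d ≠ 0) : Function.Injective (fun a : ℂ ↦ a ^ (d⁻¹ : ℂ)) :=
  Function.LeftInverse.injective (g := (· ^ d)) fun a ↦ cpow_nat_inv_pow a hd

theorem measurableSet_image_cpow_inv_natCast (hd : d ≠ 0) {S : Set ℂ} (hS : MeasurableSet S) :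
    MeasurableSet ((· ^ (d⁻¹ : ℂ)) '' S) :=
  hS.image_of_measurable_injOn (measurable_id.pow_const _) (cpow_inv_natCast_injective hd).injOn

theorem image_pow_image_cpow_inv_natCast (hd : d ≠ 0) (S : Set ℂ) :
    (· ^ d) '' ((· ^ (d⁻¹ : ℂ)) '' S) = S := by
  simp [image_image, cpow_nat_inv_pow _ hd]

theorem lintegral_image_cpow_inv_natCast (hd : d ≠ 0) {S : Set ℂ} (hS : MeasurableSet S) :
    ∫⁻ w in (· ^ (d⁻¹ : ℂ)) '' S, ENNReal.ofReal (((d : ℝ) * ‖w‖ ^ (d - 1)) ^ 2) = volume S := by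
  have hderiv : ∀ w ∈ (· ^ (d⁻¹ : ℂ)) '' S, HasFDerivWithinAt (· ^ d)
      ((ContinuousLinearMap.smulRight (1 : ℂ →L[ℂ] ℂ) ((d : ℂ) * w ^ (d - 1))).restrictScalars ℝ)
      ((· ^ (d⁻¹ : ℂ)) '' S) w := fun w _ ↦
    ((hasDerivAt_pow d w).hasFDerivAt.restrictScalars ℝ).hasFDerivWithinAt
  have hinj : InjOn (· ^ d) ((· ^ (d⁻¹ : ℂ)) '' S) := by
    rintro _ ⟨a, -, rfl⟩ _ ⟨b, -, rfl⟩ h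
    simp only [cpow_nat_inv_pow _ hd] at h
    rw [h]
  have h := lintegral_abs_det_fderiv_eq_addHaar_image volume
    (measurableSet_image_cpow_inv_natCast hd hS) hderiv hinj
  rw [image_pow_image_cpow_inv_natCast hd S] at h
  rw [← h]
  simp_rw [det_restrictScalars_smulRight_one, abs_of_nonneg (normSq_nonneg _),
    normSq_eq_norm_sq, norm_mul, norm_pow, norm_natCast]

theorem preimage_pow_eq_biUnion {ζ : ℂ} (hζ : IsPrimitiveRoot ζ d) (hd : d ≠ 0) {S : Set ℂ}
    (hS0 : (0 : ℂ) ∉ S) :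
    (· ^ d) ⁻¹' S = ⋃ k ∈ Finset.range d, (ζ ^ k * ·) '' ((· ^ (d⁻¹ : ℂ)) '' S) := by
  have : NeZero d := ⟨hd⟩
  ext w
  simp only [mem_preimage, mem_iUnion, Finset.mem_range, image_image]
  constructor
  · intro hw
    have hw0 : w ^ d ≠ 0 := ne_of_mem_of_not_mem hw hS0
    have hroot0 : (w ^ d) ^ (d⁻¹ : ℂ) ≠ 0 := fun h ↦
      hw0 (by rw [← cpow_nat_inv_pow (w ^ d) hd, h, zero_pow hd])
    have hunit : (w / (w ^ d) ^ (d⁻¹ : ℂ)) ^ d = 1 := by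
      rw [div_pow, cpow_nat_inv_pow _ hd, div_self hw0]
    obtain ⟨k, hk, hζk⟩ := hζ.eq_pow_of_pow_eq_one hunit
    exact ⟨k, hk, w ^ d, hw, show ζ ^ k * _ = w by rw [hζk, div_mul_cancel₀ _ hroot0]⟩
  · rintro ⟨k, -, a, ha, rfl⟩
    rwa [mul_pow, ← pow_mul, mul_comm k, pow_mul, hζ.pow_eq_one, one_pow, one_mul,
      cpow_nat_inv_pow _ hd]

theorem volume_preimage_pow (hd : d ≠ 0) {S : Set ℂ} (hS : MeasurableSet S) (hS0 : (0 : ℂ) ∉ S) :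
    volume ((· ^ d) ⁻¹' S) = d * volume ((· ^ (d⁻¹ : ℂ)) '' S) := by
  set A := (· ^ (d⁻¹ : ℂ)) '' S
  obtain ⟨ζ, hζ⟩ : ∃ ζ : ℂ, IsPrimitiveRoot ζ d := ⟨_, isPrimitiveRoot_exp d hd⟩
  have hζ1 : ∀ k : ℕ, normSq (ζ ^ k) = 1 := fun k ↦ by
    rw [normSq_eq_norm_sq, norm_pow, hζ.norm'_eq_one hd, one_pow, one_pow]
  have hdisj : (Finset.range d : Set ℕ).PairwiseDisjoint (fun k ↦ (ζ ^ k * ·) '' A) := by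
    intro j hj k hk hjk
    refine disjoint_left.mpr ?_
    rintro _ ⟨_, ⟨a, ha, rfl⟩, rfl⟩ ⟨_, ⟨b, hb, rfl⟩, hab⟩
    have hba : b = a := by
      have hζd : ∀ k, (ζ ^ k) ^ d = 1 := fun k ↦ by
        rw [← pow_mul, mul_comm, pow_mul, hζ.pow_eq_one, one_pow]
      simpa [mul_pow, hζd, cpow_nat_inv_pow _ hd] using congrArg (· ^ d) hab
    subst hba
    have hroot0 : b ^ (d⁻¹ : ℂ) ≠ 0 := fun h ↦
      hS0 (by rwa [← cpow_nat_inv_pow b hd, h, zero_pow hd] at hb)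
    exact hjk (hζ.pow_inj (Finset.mem_range.mp hj) (Finset.mem_range.mp hk)
      (mul_right_cancel₀ hroot0 hab).symm)
  have hmeas : ∀ k ∈ Finset.range d, MeasurableSet ((ζ ^ k * ·) '' A) := fun k _ ↦
    (measurableSet_image_cpow_inv_natCast hd hS).image_of_measurable_injOn
      (measurable_const_mul _) (mul_right_injective₀ (pow_ne_zero k (hζ.ne_zero hd))).injOn
  rw [preimage_pow_eq_biUnion hζ hd hS0, measure_biUnion_finset hdisj hmeas]
  simp [volume_image_const_mul, hζ1]

theorem volume_image_cpow_inv_natCast_le_of_separated (hd : d ≠ 0) {r : ℝ} (hr : 0 < r)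
    {S T : Set ℂ} (hS : MeasurableSet S) (hT : MeasurableSet T) (hSr : ∀ z ∈ S, r ≤ ‖z‖)
    (hTr : ∀ z ∈ T, ‖z‖ ≤ r) (hST : volume S ≤ volume T) :
    volume ((· ^ (d⁻¹ : ℂ)) '' S) ≤ volume ((· ^ (d⁻¹ : ℂ)) '' T) := by
  have hd' : (0 : ℝ) < d := Nat.cast_pos.mpr (Nat.pos_of_ne_zero hd)
  set ρ := r ^ (d⁻¹ : ℝ)
  have hρ : 0 < ρ := Real.rpow_pos_of_pos hr _
  refine measure_le_measure_of_setLIntegral_le (measurableSet_image_cpow_inv_natCast hd hS)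
    (measurableSet_image_cpow_inv_natCast hd hT)
    (f := fun w ↦ ENNReal.ofReal (((d : ℝ) * ‖w‖ ^ (d - 1)) ^ 2))
    (c := ENNReal.ofReal ((d * ρ ^ (d - 1)) ^ 2))
    (ENNReal.ofReal_pos.mpr (by positivity)).ne' ENNReal.ofReal_ne_top ?_ ?_ ?_
  · rintro _ ⟨a, ha, rfl⟩
    have : ρ ≤ ‖a ^ (d⁻¹ : ℂ)‖ := by
      rw [norm_cpow_inv_nat]
      exact Real.rpow_le_rpow hr.le (hSr a ha) (by positivity)
    gcongr
  · rintro _ ⟨a, ha, rfl⟩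
    have : ‖a ^ (d⁻¹ : ℂ)‖ ≤ ρ := by
      rw [norm_cpow_inv_nat]
      exact Real.rpow_le_rpow (norm_nonneg a) (hTr a ha) (by positivity)
    gcongr
  · rwa [lintegral_image_cpow_inv_natCast hd hS, lintegral_image_cpow_inv_natCast hd hT]

theorem volume_preimage_pow_le_of_separated (hd : d ≠ 0) {r : ℝ} (hr : 0 < r) {S T : Set ℂ}
    (hS : MeasurableSet S) (hT : MeasurableSet T) (hSr : ∀ z ∈ S, r ≤ ‖z‖)
    (hTr : ∀ z ∈ T, ‖z‖ ≤ r) (hST : volume S ≤ volume T) :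
    volume ((· ^ d) ⁻¹' S) ≤ volume ((· ^ d) ⁻¹' T) := by
  have hS0 : (0 : ℂ) ∉ S := fun h ↦ (hSr 0 h).not_gt (by simpa using hr)
  have hT' : MeasurableSet (T \ {0}) := hT.diff (measurableSet_singleton 0)
  have hroot : volume ((· ^ (d⁻¹ : ℂ)) '' S) ≤ volume ((· ^ (d⁻¹ : ℂ)) '' (T \ {0})) :=
    volume_image_cpow_inv_natCast_le_of_separated hd hr hS hT' hSr (fun z hz ↦ hTr z hz.1)
      (by rwa [measure_sdiff_null (measure_singleton 0)])
  calc volume ((· ^ d) ⁻¹' S) = d * volume ((· ^ (d⁻¹ : ℂ)) '' S) :=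
        volume_preimage_pow hd hS hS0
    _ ≤ d * volume ((· ^ (d⁻¹ : ℂ)) '' (T \ {0})) := mul_le_mul_right hroot _
    _ = volume ((· ^ d) ⁻¹' (T \ {0})) := (volume_preimage_pow hd hT' fun h ↦ h.2 rfl).symm
    _ ≤ volume ((· ^ d) ⁻¹' T) := measure_mono (preimage_mono sdiff_subset)

end Complex

theorem stmt_2_general (d : ℕ) (hd : 1 ≤ d) (X : Set ℂ) (hX : MeasurableSet X)
    (r : ℝ) (hr : 0 < r)
    (harea : ENNReal.ofReal (Real.pi * r ^ 2) = volume X) :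
    volume (X \ Metric.ball (0 : ℂ) r) ≤
      volume (Metric.ball (0 : ℂ) r \ (X ∩ Metric.ball (0 : ℂ) r)) ∧
    volume ((fun w : ℂ => w ^ d) ⁻¹' (X \ Metric.ball (0 : ℂ) r)) ≤
      volume ((fun w : ℂ => w ^ d) ⁻¹' (Metric.ball (0 : ℂ) r \ (X ∩ Metric.ball (0 : ℂ) r))) := by
  have hvol : volume X = volume (Metric.ball (0 : ℂ) r) := by
    rw [← harea, Complex.volume_ball, ENNReal.ofReal_mul Real.pi_pos.le, ENNReal.ofReal_pow hr.le,
      mul_comm, ← ENNReal.ofReal_coe_nnreal, NNReal.coe_real_pi]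
  have hfin : volume (X ∩ Metric.ball (0 : ℂ) r) ≠ ⊤ :=
    ((measure_mono inter_subset_right).trans_lt measure_ball_lt_top).ne
  have hdiff : volume (X \ Metric.ball (0 : ℂ) r) ≤ volume (Metric.ball (0 : ℂ) r \ X) :=
    (measure_sdiff_symm hX.nullMeasurableSet measurableSet_ball.nullMeasurableSet hvol hfin).le
  rw [sdiff_inter_self_eq_sdiff]
  refine ⟨hdiff, Complex.volume_preimage_pow_le_of_separated (by omega) hr
    (hX.diff measurableSet_ball) (measurableSet_ball.diff hX) ?_ ?_ hdiff⟩
  · rintro z ⟨-, hz⟩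
    simpa using hz
  · rintro z ⟨hz, -⟩
    exact (mem_ball_zero_iff.mp hz).le

theorem stmt_2 (d : ℕ) (hd : 1 ≤ d) (X : Set ℂ) (hX : MeasurableSet X)
    (hpos : 0 < volume X) (r : ℝ) (hr : 0 < r)
    (harea : ENNReal.ofReal (Real.pi * r ^ 2) = volume X) :
    volume (X \ Metric.ball (0 : ℂ) r) ≤
      volume (Metric.ball (0 : ℂ) r \ (X ∩ Metric.ball (0 : ℂ) r)) ∧
    volume ((fun w : ℂ => w ^ d) ⁻¹' (X \ Metric.ball (0 : ℂ) r)) ≤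
      volume ((fun w : ℂ => w ^ d) ⁻¹' (Metric.ball (0 : ℂ) r \ (X ∩ Metric.ball (0 : ℂ) r))) :=
  stmt_2_general d hd X hX r hr harea
end

section
/- The rational map R : ℂP² → ℂP² induced by R̂(U,V,W) = ((U²+V²)², V²(U+W)², (V²+W²)²) has exactly two points of indeterminacy, namely [i : 1 : −i] and [−i : 1 : i]. That is, the common zero locus in ℂ³∖{0} of the three homogeneous polynomials (U²+V²)², V²(U+W)², (V²+W²)² is exactly the union of the two lines through the origin spanned by (i, 1, −i) and (−i, 1, i). -/
/-- The homogeneous degree-4 lift of the Migdal–Kadanoff renormalization. -/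
def Rhat (p : ℂ × ℂ × ℂ) : ℂ × ℂ × ℂ :=
  ((p.1 ^ 2 + p.2.1 ^ 2) ^ 2, p.2.1 ^ 2 * (p.1 + p.2.2) ^ 2, (p.2.1 ^ 2 + p.2.2 ^ 2) ^ 2)

theorem stmt_9 :
    {p : ℂ × ℂ × ℂ | p ≠ 0 ∧ Rhat p = 0} =
      {p : ℂ × ℂ × ℂ | ∃ l : ℂ, l ≠ 0 ∧ p = (Complex.I * l, l, -Complex.I * l)} ∪
      {p : ℂ × ℂ × ℂ | ∃ l : ℂ, l ≠ 0 ∧ p = (-Complex.I * l, l, Complex.I * l)} := by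
  ext ⟨U, V, W⟩
  simp only [Set.mem_setOf_eq, Set.mem_union, Rhat, Prod.ext_iff, Prod.mk.injEq, ne_eq, Prod.fst_zero, Prod.snd_zero]
  constructor
  · rintro ⟨hne, h1, h2, h3⟩
    have h1' : U ^ 2 + V ^ 2 = 0 := by
      have := pow_eq_zero_iff (n := 2) (by norm_num) |>.mp h1; exact this
    have h3' : V ^ 2 + W ^ 2 = 0 := by
      have := pow_eq_zero_iff (n := 2) (by norm_num) |>.mp h3; exact this
    have hV : V ≠ 0 := by
      intro hV
      apply hne
      subst hV
      have hU : U = 0 := by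
        have : U ^ 2 = 0 := by linear_combination h1'
        exact pow_eq_zero_iff (by norm_num) |>.mp this
      have hW : W = 0 := by
        have : W ^ 2 = 0 := by linear_combination h3'
        exact pow_eq_zero_iff (by norm_num) |>.mp this
      simp [hU, hW, Prod.ext_iff]
    have hUW : U + W = 0 := by
      rcases mul_eq_zero.mp h2 with h | h
      · exact absurd (pow_eq_zero_iff (n := 2) (by norm_num) |>.mp h) hV
      · exact pow_eq_zero_iff (n := 2) (by norm_num) |>.mp h
    -- U² = -V², so (U - I V)(U + I V) = 0
    have hfac : (U - Complex.I * V) * (U + Complex.I * V) = 0 := by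
      have hI : Complex.I ^ 2 = -1 := Complex.I_sq
      linear_combination h1' - V ^ 2 * hI - hI * V ^ 2 + V^2 * Complex.I_sq
    rcases mul_eq_zero.mp hfac with h | h
    · left
      exact ⟨V, hV, by linear_combination h, rfl, by linear_combination hUW - h⟩
    · right
      exact ⟨V, hV, by linear_combination h, rfl, by linear_combination hUW - h⟩
  · rintro (⟨l, hl, rfl, rfl, rfl⟩ | ⟨l, hl, rfl, rfl, rfl⟩) <;>
      exact ⟨fun h => hl h.2.1,
        by linear_combination (Complex.I ^ 2 + 1) * V ^ 4 * Complex.I_sq,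
        by ring,
        by linear_combination (Complex.I ^ 2 + 1) * V ^ 4 * Complex.I_sq⟩
end

section
/- Let f : ℂ² → ℂ² near the origin be given in coordinates (τ, η) by f(τ, η) = ( ((η² + (τ−1)²)/(1+η²))², τ²η²/(1+η²)² ). Then the Jacobian determinant of f satisfies det Df(τ,η) = η·τ²·h(τ,η) for some function h holomorphic near (0,0) with h(0,0) ≠ 0; in particular |det Df| ≍ |η||τ|² near the origin. -/
/-!
Writing `s = (τ - 1)²`, both partial derivatives of the first component carry the factor `η² + s`, and
`det Df = 8 η τ² (η² + s) (τ - 1 - η²) / (1 + η²)⁵`, where `1 - s = τ (2 - τ)` supplies the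
second factor of `τ`. The cofactor is holomorphic where `1 + η² ≠ 0` and equals `-8` at the origin, so by
continuity its modulus stays in `[4, 16]` near `0`, which gives the two-sided bound.
-/

/-- Jacobian determinant (via partial derivatives) of
`f(τ,η) = ( ((η² + (τ−1)²)/(1+η²))², τ²η²/(1+η²)² )`. -/
noncomputable def jacf (p : ℂ × ℂ) : ℂ :=
  deriv (fun τ => ((p.2 ^ 2 + (τ - 1) ^ 2) / (1 + p.2 ^ 2)) ^ 2) p.1 *
      deriv (fun η => p.1 ^ 2 * η ^ 2 / (1 + η ^ 2) ^ 2) p.2 -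
    deriv (fun η => ((η ^ 2 + (p.1 - 1) ^ 2) / (1 + η ^ 2)) ^ 2) p.2 *
      deriv (fun τ => τ ^ 2 * p.2 ^ 2 / (1 + p.2 ^ 2) ^ 2) p.1

open Filter Topology

noncomputable def jacCofactor (p : ℂ × ℂ) : ℂ :=
  8 * (p.2 ^ 2 + (p.1 - 1) ^ 2) * (p.1 - 1 - p.2 ^ 2) / (1 + p.2 ^ 2) ^ 5

lemma jacf_eq_mul_jacCofactor {τ η : ℂ} (hη : 1 + η ^ 2 ≠ 0) :
    jacf (τ, η) = η * τ ^ 2 * jacCofactor (τ, η) := by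
  have d₁ : HasDerivAt (fun τ => ((η ^ 2 + (τ - 1) ^ 2) / (1 + η ^ 2)) ^ 2)
      (4 * (η ^ 2 + (τ - 1) ^ 2) * (τ - 1) / (1 + η ^ 2) ^ 2) τ := by
    refine (((((hasDerivAt_id' τ).sub_const 1).pow 2).const_add (η ^ 2)).div_const
      (1 + η ^ 2) |>.pow 2).congr_deriv ?_
    norm_num [Pi.pow_apply]
    field_simp
    ring
  have d₂ : HasDerivAt (fun η => τ ^ 2 * η ^ 2 / (1 + η ^ 2) ^ 2)
      (2 * τ ^ 2 * η * (1 - η ^ 2) / (1 + η ^ 2) ^ 3) η := by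
    refine (((hasDerivAt_pow 2 η).const_mul (τ ^ 2)).div
      (((hasDerivAt_pow 2 η).const_add 1).pow 2) (pow_ne_zero 2 hη)).congr_deriv ?_
    norm_num
    field_simp
    ring
  have d₃ : HasDerivAt (fun η => ((η ^ 2 + (τ - 1) ^ 2) / (1 + η ^ 2)) ^ 2)
      (4 * (η ^ 2 + (τ - 1) ^ 2) * η * (1 - (τ - 1) ^ 2) / (1 + η ^ 2) ^ 3) η := by
    refine ((((hasDerivAt_pow 2 η).add_const ((τ - 1) ^ 2)).div
      ((hasDerivAt_pow 2 η).const_add 1) hη).pow 2).congr_deriv ?_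
    norm_num
    field_simp
    ring
  have d₄ : HasDerivAt (fun τ => τ ^ 2 * η ^ 2 / (1 + η ^ 2) ^ 2)
      (2 * τ * η ^ 2 / (1 + η ^ 2) ^ 2) τ := by
    exact (((hasDerivAt_pow 2 τ).mul_const (η ^ 2)).div_const ((1 + η ^ 2) ^ 2)).congr_deriv
      (by norm_num)
  rw [jacf, d₁.deriv, d₂.deriv, d₃.deriv, d₄.deriv, jacCofactor]
  field_simp
  ring

lemma analyticAt_jacCofactor {p : ℂ × ℂ} (hp : 1 + p.2 ^ 2 ≠ 0) :
    AnalyticAt ℂ jacCofactor p := by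
  have hfst : AnalyticAt ℂ Prod.fst p := analyticAt_fst
  have hsnd : AnalyticAt ℂ Prod.snd p := analyticAt_snd
  unfold jacCofactor
  fun_prop (disch := exact pow_ne_zero 5 hp)

lemma jacCofactor_zero : jacCofactor 0 = -8 := by
  norm_num [jacCofactor]

lemma ContinuousAt.eventually_norm_mem_Icc {X E : Type*} [TopologicalSpace X]
    [NormedAddCommGroup E] {g : X → E} {x : X} (hg : ContinuousAt g x) (hx : g x ≠ 0) :
    ∀ᶠ y in 𝓝 x, ‖g y‖ ∈ Set.Icc (‖g x‖ / 2) (2 * ‖g x‖) := by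
  have hpos : 0 < ‖g x‖ := norm_pos_iff.mpr hx
  refine hg.norm.eventually_mem (Icc_mem_nhds ?_ ?_) <;> linarith

theorem stmt_15 :
    ∃ h : ℂ × ℂ → ℂ, AnalyticAt ℂ h 0 ∧ h 0 ≠ 0 ∧
      (∀ᶠ p : ℂ × ℂ in nhds 0, jacf p = p.2 * p.1 ^ 2 * h p) ∧
      ∃ c C : ℝ, 0 < c ∧ 0 < C ∧
        ∀ᶠ p : ℂ × ℂ in nhds 0,
          c * (‖p.2‖ * ‖p.1‖ ^ 2) ≤ ‖jacf p‖ ∧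
          ‖jacf p‖ ≤ C * (‖p.2‖ * ‖p.1‖ ^ 2) := by
  have hden : ∀ᶠ p : ℂ × ℂ in 𝓝 0, 1 + p.2 ^ 2 ≠ 0 :=
    (by fun_prop : Continuous fun p : ℂ × ℂ => 1 + p.2 ^ 2).continuousAt.eventually_ne
      (by norm_num)
  have heq : ∀ᶠ p : ℂ × ℂ in 𝓝 0, jacf p = p.2 * p.1 ^ 2 * jacCofactor p :=
    hden.mono fun p hp => jacf_eq_mul_jacCofactor hp
  have hA : AnalyticAt ℂ jacCofactor 0 := analyticAt_jacCofactor (by norm_num)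
  have h0 : jacCofactor 0 ≠ 0 := by norm_num [jacCofactor_zero]
  refine ⟨jacCofactor, hA, h0, heq, 4, 16, by norm_num, by norm_num, ?_⟩
  filter_upwards [heq, hA.continuousAt.eventually_norm_mem_Icc h0] with p hp hb
  rw [jacCofactor_zero, norm_neg] at hb
  norm_num at hb
  rw [hp, norm_mul, norm_mul, norm_pow]
  have hnn : 0 ≤ ‖p.2‖ * ‖p.1‖ ^ 2 := by positivity
  constructor <;> nlinarith [hb.1, hb.2]
end
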